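/- arXiv:math/0201143 — 4 statements merged into one kernel-verified Lean document; each statement's English description precedes it below -/
import Mathlib

section
/- Let C be an admissible column on 𝒞_n with paired letters K_C = {x_1 < x_2 < ⋯ < x_r} (listed in increasing order). Define L_C = (u_1, …, u_r) greedily by: u_i is the greatest unbarred letter with u_i < x_i, u_i ∉ C, ū_i ∉ C, and u_i ∉ {u_1, …, u_{i−1}}. Define J_C = {t_1 > ⋯ > t_r} greedily from the decreasing enumeration z_1 > ⋯ > z_r of the same paired letters by: t_i is the greatest unbarred letter with t_i < z_i, t_i ∉ C, t̄_i ∉ C, and t_i ∉ {t_1, …, t_{i−1}}. Then both greedy procedures succeed or fail together, and when they succeed {u_1, …, u_r} = {t_1, …, t_r} as sets. -/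
def unb {n : ℕ} (z : Fin n) : Fin (2 * n) := ⟨z.1, by have := z.2; omega⟩

def bar {n : ℕ} (z : Fin n) : Fin (2 * n) := ⟨2 * n - 1 - z.1, by have := z.2; omega⟩

def Free {n : ℕ} (C : Finset (Fin (2 * n))) (u : Fin n) : Prop := unb u ∉ C ∧ bar u ∉ C

/-- `t` is the sequence of greedy choices along the enumeration `w` of the paired
letters of `C`: each `t i` is the greatest unbarred letter below `w i` that is free
and distinct from the previously chosen ones. -/
def GreedySeq {n r : ℕ} (C : Finset (Fin (2 * n))) (w t : Fin r → Fin n) : Prop :=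
  ∀ i : Fin r, t i < w i ∧ Free C (t i) ∧ (∀ j : Fin r, j < i → t j ≠ t i) ∧
    ∀ u : Fin n, u < w i → Free C u → (∀ j : Fin r, j < i → t j ≠ u) → u ≤ t i


lemma sm_unique {r n : ℕ} {f g : Fin r → Fin n}
    (hf : StrictMono f) (hg : StrictMono g)
    (hrange : ∀ a, (∃ i, f i = a) ↔ (∃ i, g i = a)) : f = g := by
  funext i
  have key : ∀ m : ℕ, ∀ i : Fin r, i.1 = m → f i = g i := by
    intro m
    induction m using Nat.strong_induction_on with
    | _ m IH =>
      rintro i rfl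
      rcases lt_trichotomy (f i) (g i) with h | h | h
      · obtain ⟨j, hj⟩ := (hrange (f i)).mp ⟨i, rfl⟩
        have hji : j < i := hg.lt_iff_lt.mp (by rw [hj]; exact h)
        have := IH j.1 hji j rfl
        exact absurd (hf.injective (this.trans hj)) hji.ne
      · exact h
      · obtain ⟨j, hj⟩ := (hrange (g i)).mpr ⟨i, rfl⟩
        have hji : j < i := hf.lt_iff_lt.mp (by rw [hj]; exact h)
        have := IH j.1 hji j rfl
        exact absurd (hg.injective (this.symm.trans hj)) hji.ne
  exact key i.1 i rfl

lemma greedy_unique {r n : ℕ} {C : Finset (Fin (2 * n))} {w t t' : Fin r → Fin n}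
    (ht : GreedySeq C w t) (ht' : GreedySeq C w t') : t = t' := by
  funext i
  have key : ∀ m : ℕ, ∀ i : Fin r, i.1 = m → t i = t' i := by
    intro m
    induction m using Nat.strong_induction_on with
    | _ m IH =>
      rintro i rfl
      have h1 : t' i ≤ t i := by
        refine (ht i).2.2.2 _ (ht' i).1 (ht' i).2.1 ?_
        intro j hj
        rw [IH j.1 hj j rfl]
        exact (ht' i).2.2.1 j hj
      have h2 : t i ≤ t' i := by
        refine (ht' i).2.2.2 _ (ht i).1 (ht i).2.1 ?_
        intro j hj
        rw [← IH j.1 hj j rfl]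
        exact (ht i).2.2.1 j hj
      exact le_antisymm h2 h1
  exact key i.1 i rfl

lemma greedy_inj {r n : ℕ} {C : Finset (Fin (2 * n))} {w t : Fin r → Fin n}
    (ht : GreedySeq C w t) : Function.Injective t := by
  intro a b hab
  rcases lt_trichotomy a b with h | h | h
  · exact absurd hab ((ht b).2.2.1 a h)
  · exact h
  · exact absurd hab.symm ((ht a).2.2.1 b h)

lemma sorted_greedy {r n : ℕ} {C : Finset (Fin (2 * n))} {x z t : Fin r → Fin n}
    (hx : StrictMono x) (hzx : ∀ k, z k = x k.rev)
    (ht : GreedySeq C x t) :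
    ∃ s : Fin r → Fin n, GreedySeq C z s ∧ Set.range s = Set.range t := by
  classical
  set T : Finset (Fin n) := Finset.image t Finset.univ with hT
  have hinj := greedy_inj ht
  have hcard : T.card = r := by
    rw [hT, Finset.card_image_of_injective _ hinj, Finset.card_univ, Fintype.card_fin]
  set e := T.orderEmbOfFin hcard with he
  have he_mem : ∀ m, e m ∈ T := fun m => T.orderEmbOfFin_mem hcard m
  have hTmem : ∀ a, a ∈ T ↔ ∃ k, t k = a := by intro a; simp [hT]
  set s : Fin r → Fin n := fun i => e i.rev with hs
  have hsurj : ∀ b ∈ T, ∃ m, e m = b := by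
    intro b hb
    have : b ∈ Set.range e := by rw [he, Finset.range_orderEmbOfFin]; exact hb
    exact this
  have hIci : ∀ i : Fin r, (Finset.Ici i.rev).card = (i : ℕ) + 1 := by
    intro i
    rw [Fin.card_Ici, Fin.val_rev]
    have := i.2; omega
  have hIoi : ∀ i : Fin r, (Finset.Ioi i.rev).card = (i : ℕ) := by
    intro i
    rw [Fin.card_Ioi, Fin.val_rev]
    have := i.2; omega
  have low : ∀ (i : Fin r) (c : Fin n), c ≤ s i →
      (i : ℕ) + 1 ≤ (T.filter (fun b => c ≤ b)).card := by
    intro i c hc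
    have hsub : (Finset.Ici i.rev).image e ⊆ T.filter (fun b => c ≤ b) := by
      intro b hb
      simp only [Finset.mem_image, Finset.mem_Ici] at hb
      obtain ⟨m, hm, rfl⟩ := hb
      exact Finset.mem_filter.mpr ⟨he_mem m, hc.trans (e.monotone hm)⟩
    calc (i : ℕ) + 1 = ((Finset.Ici i.rev).image e).card := by
            rw [Finset.card_image_of_injective _ e.injective, hIci]
      _ ≤ _ := Finset.card_le_card hsub
  have upper : ∀ (i : Fin r) (c : Fin n), s i ≤ c →
      (T.filter (fun b => c < b)).card ≤ (i : ℕ) := by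
    intro i c hc
    have hsub : T.filter (fun b => c < b) ⊆ (Finset.Ioi i.rev).image e := by
      intro b hb
      obtain ⟨hbT, hcb⟩ := Finset.mem_filter.mp hb
      obtain ⟨m, rfl⟩ := hsurj b hbT
      simp only [Finset.mem_image, Finset.mem_Ioi]
      refine ⟨m, ?_, rfl⟩
      exact (OrderEmbedding.lt_iff_lt e).mp (lt_of_le_of_lt hc hcb)
    calc (T.filter (fun b => c < b)).card ≤ ((Finset.Ioi i.rev).image e).card :=
          Finset.card_le_card hsub
      _ = (i : ℕ) := by rw [Finset.card_image_of_injective _ e.injective, hIoi]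
  refine ⟨s, ?_, ?_⟩
  · intro i
    have hfree : Free C (s i) := by
      obtain ⟨k, hk⟩ := (hTmem (s i)).mp (he_mem i.rev)
      rw [← hk]; exact (ht k).2.1
    have hslt : s i < z i := by
      by_contra hcon
      push_neg at hcon
      have h1 := low i (z i) hcon
      have hsub : T.filter (fun b => z i ≤ b) ⊆ (Finset.Ioi i.rev).image t := by
        intro b hb
        obtain ⟨hbT, hzb⟩ := Finset.mem_filter.mp hb
        obtain ⟨k, rfl⟩ := (hTmem b).mp hbT
        simp only [Finset.mem_image, Finset.mem_Ioi]
        refine ⟨k, ?_, rfl⟩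
        have : x i.rev < x k := lt_of_le_of_lt (by rw [← hzx]; exact hzb) (ht k).1
        exact hx.lt_iff_lt.mp this
      have h2 : (T.filter (fun b => z i ≤ b)).card ≤ (i : ℕ) := by
        calc _ ≤ ((Finset.Ioi i.rev).image t).card := Finset.card_le_card hsub
          _ ≤ (Finset.Ioi i.rev).card := Finset.card_image_le
          _ = (i : ℕ) := hIoi i
      omega
    refine ⟨hslt, hfree, ?_, ?_⟩
    · intro j hj hne
      have : j.rev = i.rev := e.injective hne
      exact absurd (Fin.rev_injective this) hj.ne
    · intro u hu hufree hprev
      by_cases huT : u ∈ T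
      · obtain ⟨m, rfl⟩ := hsurj u huT
        have hsm : s m.rev = e m := by rw [hs]; simp [Fin.rev_rev]
        rcases lt_or_ge m.rev i with hlt | hle
        · exact absurd hsm (hprev m.rev hlt)
        · have hmle : m ≤ i.rev := by
            rw [Fin.le_def, Fin.val_rev]
            rw [Fin.le_def, Fin.val_rev] at hle
            have := m.2; have := i.2; omega
          exact e.monotone hmle
      · by_contra hcon
        push_neg at hcon
        have hsub : (Finset.Ici i.rev).image t ⊆ T.filter (fun b => u < b) := by
          intro b hb
          simp only [Finset.mem_image, Finset.mem_Ici] at hb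
          obtain ⟨k, hk, rfl⟩ := hb
          refine Finset.mem_filter.mpr ⟨(hTmem _).mpr ⟨k, rfl⟩, ?_⟩
          have hux : u < x k := lt_of_lt_of_le (by rw [hzx] at hu; exact hu) (hx.monotone hk)
          have hle : u ≤ t k := (ht k).2.2.2 u hux hufree
            (fun j _ hj => huT ((hTmem u).mpr ⟨j, hj⟩))
          have hne : u ≠ t k := fun h => huT ((hTmem u).mpr ⟨k, h.symm⟩)
          exact lt_of_le_of_ne hle hne
        have h1 : (i : ℕ) + 1 ≤ (T.filter (fun b => u < b)).card := by
          calc (i : ℕ) + 1 = ((Finset.Ici i.rev).image t).card := by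
                rw [Finset.card_image_of_injective _ hinj, hIci]
            _ ≤ _ := Finset.card_le_card hsub
        have h2 := upper i u hcon.le
        omega
  · have h1 : Set.range s = (T : Set (Fin n)) := by
      ext a
      constructor
      · rintro ⟨m, rfl⟩; exact he_mem m.rev
      · intro ha
        obtain ⟨m, rfl⟩ := hsurj a ha
        exact ⟨m.rev, by simp [hs, Fin.rev_rev]⟩
    have h2 : Set.range t = (T : Set (Fin n)) := by
      ext a; simp [hTmem, eq_comm]
    rw [h1, h2]

noncomputable def gr {n r : ℕ} (C : Finset (Fin (2 * n))) (x : Fin r → Fin n) (d : Fin n)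
    (i : ℕ) : Fin n :=
  if h : (@Finset.filter _
      (fun a => (∀ h : i < r, a < x ⟨i, h⟩) ∧ Free C a ∧
        ∀ j : Fin r, j.1 < i → gr C x d j.1 ≠ a) (Classical.decPred _) Finset.univ).Nonempty
  then (@Finset.filter _
      (fun a => (∀ h : i < r, a < x ⟨i, h⟩) ∧ Free C a ∧
        ∀ j : Fin r, j.1 < i → gr C x d j.1 ≠ a) (Classical.decPred _) Finset.univ).max' h
  else d
termination_by i
decreasing_by all_goals assumption

lemma gr_eq {n r : ℕ} (C : Finset (Fin (2 * n))) (x : Fin r → Fin n) (d : Fin n) (i : ℕ) :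
    gr C x d i =
      if h : (@Finset.filter _
          (fun a => (∀ h : i < r, a < x ⟨i, h⟩) ∧ Free C a ∧
            ∀ j : Fin r, j.1 < i → gr C x d j.1 ≠ a) (Classical.decPred _) Finset.univ).Nonempty
      then (@Finset.filter _
          (fun a => (∀ h : i < r, a < x ⟨i, h⟩) ∧ Free C a ∧
            ∀ j : Fin r, j.1 < i → gr C x d j.1 ≠ a) (Classical.decPred _) Finset.univ).max' h
      else d := by
  rw [gr]

lemma greedy_exists {r n : ℕ} {C : Finset (Fin (2 * n))} {x z t' : Fin r → Fin n}
    (hx : StrictMono x) (hzx : ∀ k, z k = x k.rev)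
    (ht' : GreedySeq C z t') : ∃ u : Fin r → Fin n, GreedySeq C x u := by
  classical
  rcases Nat.eq_zero_or_pos r with hr | hr
  · subst hr; exact ⟨fun i => i.elim0, fun i => i.elim0⟩
  set d : Fin n := t' ⟨0, hr⟩ with hd
  set u : Fin r → Fin n := fun i => gr C x d i.1 with hu
  have hinj' := greedy_inj ht'
  have hIci : ∀ i : Fin r, (Finset.Ici i.rev).card = (i : ℕ) + 1 := by
    intro i
    rw [Fin.card_Ici, Fin.val_rev]
    have := i.2; omega
  have hne : ∀ i : Fin r, (@Finset.filter _
      (fun a => (∀ h : (i : ℕ) < r, a < x ⟨(i : ℕ), h⟩) ∧ Free C a ∧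
        ∀ j : Fin r, j.1 < (i : ℕ) → gr C x d j.1 ≠ a) (Classical.decPred _) Finset.univ).Nonempty := by
    intro i
    set A : Finset (Fin n) := (Finset.Ici i.rev).image t' with hA
    set P : Finset (Fin n) := (Finset.range i.1).image (fun m => gr C x d m) with hP
    have hcardA : A.card = (i : ℕ) + 1 := by
      rw [hA, Finset.card_image_of_injective _ hinj', hIci]
    have hcardP : P.card ≤ (i : ℕ) := by
      calc P.card ≤ (Finset.range i.1).card := Finset.card_image_le
        _ = (i : ℕ) := Finset.card_range _
    have hex : ∃ a ∈ A, a ∉ P := by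
      by_contra hcon
      push_neg at hcon
      have := Finset.card_le_card hcon
      omega
    obtain ⟨a, haA, haP⟩ := hex
    simp only [hA, Finset.mem_image, Finset.mem_Ici] at haA
    obtain ⟨k, hk, rfl⟩ := haA
    refine ⟨t' k, (@Finset.mem_filter _ _ (Classical.decPred _) _ _).mpr ⟨Finset.mem_univ _, ?_, (ht' k).2.1, ?_⟩⟩
    · intro h
      have hkrev : k.rev ≤ i := by
        rw [Fin.le_def, Fin.val_rev]
        rw [Fin.le_def, Fin.val_rev] at hk
        have := k.2; have := i.2; omega
      have : z k ≤ x ⟨(i : ℕ), h⟩ := by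
        rw [hzx]
        exact hx.monotone (by rwa [Fin.eta])
      exact lt_of_lt_of_le (ht' k).1 this
    · intro j hj hcontra
      exact haP (Finset.mem_image.mpr ⟨j.1, Finset.mem_range.mpr hj, hcontra⟩)
  refine ⟨u, ?_⟩
  intro i
  have heq : u i = (@Finset.filter _
      (fun a => (∀ h : (i : ℕ) < r, a < x ⟨(i : ℕ), h⟩) ∧ Free C a ∧
        ∀ j : Fin r, j.1 < (i : ℕ) → gr C x d j.1 ≠ a) (Classical.decPred _) Finset.univ).max' (hne i) := by
    rw [hu]
    simp only []
    rw [gr_eq, dif_pos (hne i)]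
  have hmem := Finset.max'_mem _ (hne i)
  rw [← heq] at hmem
  obtain ⟨-, h1, h2, h3⟩ := (@Finset.mem_filter _ _ (Classical.decPred _) _ _).mp hmem
  refine ⟨by have := h1 i.2; rwa [Fin.eta] at this, h2, ?_, ?_⟩
  · intro j hj
    exact h3 j hj
  · intro a ha hafree haprev
    have : a ∈ @Finset.filter _
        (fun a => (∀ h : (i : ℕ) < r, a < x ⟨(i : ℕ), h⟩) ∧ Free C a ∧
          ∀ j : Fin r, j.1 < (i : ℕ) → gr C x d j.1 ≠ a) (Classical.decPred _) Finset.univ := by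
      refine (@Finset.mem_filter _ _ (Classical.decPred _) _ _).mpr ⟨Finset.mem_univ _, ?_, hafree, ?_⟩
      · intro h; rwa [Fin.eta]
      · intro j hj
        exact haprev j hj
    rw [heq]
    exact Finset.le_max' _ _ this


theorem stmt5 (n r : ℕ) (C : Finset (Fin (2 * n))) (x z : Fin r → Fin n)
    (hx : StrictMono x)
    (hxrange : ∀ a : Fin n, (∃ i, x i = a) ↔ (unb a ∈ C ∧ bar a ∈ C))
    (hz : StrictAnti z)
    (hzrange : ∀ a : Fin n, (∃ i, z i = a) ↔ (unb a ∈ C ∧ bar a ∈ C)) :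
    ((∃ t, GreedySeq C x t) ↔ ∃ t', GreedySeq C z t') ∧
    ∀ t t', GreedySeq C x t → GreedySeq C z t' → Set.range t = Set.range t' := by

  have hy : StrictMono (fun k : Fin r => z k.rev) := by
    intro a b hab
    exact hz (Fin.rev_lt_rev.mpr hab)
  have hxy : x = fun k : Fin r => z k.rev := by
    refine sm_unique hx hy ?_
    intro a
    rw [hxrange]
    constructor
    · intro h
      obtain ⟨i, hi⟩ := (hzrange a).mpr h
      exact ⟨i.rev, by rwa [Fin.rev_rev]⟩
    · rintro ⟨i, hi⟩
      exact (hzrange a).mp ⟨i.rev, hi⟩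
  have hzx : ∀ k : Fin r, z k = x k.rev := by
    intro k
    rw [hxy]
    simp [Fin.rev_rev]
  constructor
  · constructor
    · rintro ⟨t, ht⟩
      obtain ⟨s, hsz, -⟩ := sorted_greedy hx hzx ht
      exact ⟨s, hsz⟩
    · rintro ⟨t', ht'⟩
      exact greedy_exists hx hzx ht'
  · intro t t' ht ht'
    obtain ⟨s, hsz, hrange⟩ := sorted_greedy hx hzx ht
    rw [← hrange, greedy_unique hsz ht']
end

section
/- Let C be an admissible column on 𝒞_n with paired letters I_C = {z_1 > ⋯ > z_r} and associated set J_C = {t_1 > ⋯ > t_r}. Then the column lC, obtained from C by replacing each unbarred letter z_i by t_i, is again a strictly increasing sequence of letters of 𝒞_n; likewise rC, obtained from C by replacing each barred letter z̄_i by t̄_i, is a strictly increasing sequence. -/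

lemma aux_card {α : Type*} [DecidableEq α] {r : ℕ} (C : Finset α) (f g : Fin r → α)
    (hf : Function.Injective f) (hg : Function.Injective g)
    (hfC : ∀ i, f i ∈ C) (hgC : ∀ i, g i ∉ C) :
    ((C \ Finset.image f Finset.univ) ∪ Finset.image g Finset.univ).card = C.card := by
  have hA : Finset.image f Finset.univ ⊆ C := by
    intro a ha
    obtain ⟨i, _, rfl⟩ := Finset.mem_image.mp ha
    exact hfC i
  have hcardA : (Finset.image f Finset.univ).card = r := by
    rw [Finset.card_image_of_injective _ hf, Finset.card_fin]
  have hcardB : (Finset.image g Finset.univ).card = r := by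
    rw [Finset.card_image_of_injective _ hg, Finset.card_fin]
  have hdisj : Disjoint (C \ Finset.image f Finset.univ) (Finset.image g Finset.univ) := by
    rw [Finset.disjoint_right]
    intro a ha
    obtain ⟨i, _, rfl⟩ := Finset.mem_image.mp ha
    simp only [Finset.mem_sdiff]
    intro h
    exact hgC i h.1
  rw [Finset.card_union_of_disjoint hdisj, Finset.card_sdiff_of_subset hA, hcardA, hcardB]
  have : r ≤ C.card := hcardA ▸ Finset.card_le_card hA
  omega

/-- `z` enumerates the paired letters `z_1 > ⋯ > z_r` of the admissible column `C`
and `t` the associated letters `t_1 > ⋯ > t_r` of `J_C` (greedy, so maximal).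
The columns `lC` (replace each `z_i` by `t_i`) and `rC` (replace each `z̄_i` by `t̄_i`)
are again columns of the same height, i.e. strictly increasing sequences:
as sets of letters they have the same cardinality as `C`. -/
theorem stmt6 (n r : ℕ) (C : Finset (Fin (2 * n))) (z t : Fin r → Fin n)
    (hz : StrictAnti z)
    (hzrange : ∀ a : Fin n, (∃ i, z i = a) ↔ (unb a ∈ C ∧ bar a ∈ C))
    (ht : StrictAnti t)
    (htlt : ∀ i, t i < z i)
    (htfree : ∀ i, unb (t i) ∉ C ∧ bar (t i) ∉ C)
    (htmax : ∀ (i : Fin r) (u : Fin n), u < z i → (∀ j : Fin r, j < i → u < t j) →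
      unb u ∉ C → bar u ∉ C → u ≤ t i) :
    ((C \ Finset.image (fun i => unb (z i)) Finset.univ)
        ∪ Finset.image (fun i => unb (t i)) Finset.univ).card = C.card ∧
    ((C \ Finset.image (fun i => bar (z i)) Finset.univ)
        ∪ Finset.image (fun i => bar (t i)) Finset.univ).card = C.card := by
  have hunb : Function.Injective (unb (n := n)) := by
    intro a b h
    have := congrArg Fin.val h
    simp only [unb] at this
    exact Fin.ext this
  have hbar : Function.Injective (bar (n := n)) := by
    intro a b h
    have := congrArg Fin.val h
    simp only [bar] at this
    have ha := a.2; have hb := b.2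
    exact Fin.ext (by omega)
  have hzin : Function.Injective z := hz.injective
  have htin : Function.Injective t := ht.injective
  constructor
  · exact aux_card C _ _ (hunb.comp hzin) (hunb.comp htin)
      (fun i => ((hzrange (z i)).mp ⟨i, rfl⟩).1) (fun i => (htfree i).1)
  · exact aux_card C _ _ (hbar.comp hzin) (hbar.comp htin)
      (fun i => ((hzrange (z i)).mp ⟨i, rfl⟩).2) (fun i => (htfree i).2)
end

section
/- Let R be a commutative ring. For each m ≥ 1, in the free R-module on columns of height p on 𝒞_n, define f_{n-1} and f_n by the explicit combinatorial formulas (fi) and (f0) of the symplectic column module over R = ℤ[q,q⁻¹]. Then for every column C of height p one has f_n f_{n−1} f_n v_C = 0. -/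
open LaurentPolynomial

/-- Letters of `𝒞_n` (for `n ≥ 2`): `n-1`, `n`, `n̄`, `\overline{n-1}` sit at
positions `n-2`, `n-1`, `n`, `n+1` of `Fin (2*n)`. -/
def ln1 (n : ℕ) (hn : 2 ≤ n) : Fin (2 * n) := ⟨n - 2, by omega⟩
def ln (n : ℕ) (hn : 2 ≤ n) : Fin (2 * n) := ⟨n - 1, by omega⟩
def lnb (n : ℕ) (hn : 2 ≤ n) : Fin (2 * n) := ⟨n, by omega⟩
def ln1b (n : ℕ) (hn : 2 ≤ n) : Fin (2 * n) := ⟨n + 1, by omega⟩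

/-- Action of `f_n` on a basis vector `v_C`. -/
noncomputable def fnVec (n : ℕ) (hn : 2 ≤ n) (C : Finset (Fin (2 * n))) :
    Finset (Fin (2 * n)) →₀ LaurentPolynomial ℤ :=
  if ln n hn ∈ C ∧ lnb n hn ∉ C then
    Finsupp.single (insert (lnb n hn) (C.erase (ln n hn))) 1
  else 0

noncomputable def fn (n : ℕ) (hn : 2 ≤ n) :
    (Finset (Fin (2 * n)) →₀ LaurentPolynomial ℤ) →ₗ[LaurentPolynomial ℤ]
      (Finset (Fin (2 * n)) →₀ LaurentPolynomial ℤ) :=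
  Finsupp.linearCombination _ (fnVec n hn)

/-- Action of `f_{n-1}` on a basis vector `v_C`, by cases on
`E = C ∩ {n̄, \overline{n-1}, n-1, n}`. -/
noncomputable def fn1Vec (n : ℕ) (hn : 2 ≤ n) (C : Finset (Fin (2 * n))) :
    Finset (Fin (2 * n)) →₀ LaurentPolynomial ℤ :=
  let E : Finset (Fin (2 * n)) := C ∩ {lnb n hn, ln1b n hn, ln1 n hn, ln n hn}
  if E = {ln1 n hn} ∨ E = {lnb n hn, ln1b n hn, ln1 n hn} ∨ E = {ln1b n hn, ln1 n hn} then
    Finsupp.single (insert (ln n hn) (C.erase (ln1 n hn))) 1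
  else if E = {lnb n hn} ∨ E = {lnb n hn, ln1 n hn, ln n hn} then
    Finsupp.single (insert (ln1b n hn) (C.erase (lnb n hn))) 1
  else if E = {lnb n hn, ln n hn} then
    Finsupp.single (insert (ln1b n hn) (C.erase (lnb n hn))) (T (-1))
  else if E = {lnb n hn, ln1 n hn} then
    Finsupp.single (insert (ln n hn) (C.erase (ln1 n hn))) 1
      + Finsupp.single (insert (ln1b n hn) (C.erase (lnb n hn))) (T 1)
  else 0

noncomputable def fn1 (n : ℕ) (hn : 2 ≤ n) :
    (Finset (Fin (2 * n)) →₀ LaurentPolynomial ℤ) →ₗ[LaurentPolynomial ℤ]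
      (Finset (Fin (2 * n)) →₀ LaurentPolynomial ℤ) :=
  Finsupp.linearCombination _ (fn1Vec n hn)

theorem stmt13 (n p : ℕ) (hn : 2 ≤ n) (C : Finset (Fin (2 * n))) (hC : C.card = p) :
    fn n hn (fn1 n hn (fn n hn (Finsupp.single C 1))) = 0 := by
  have fn_single : ∀ (D : Finset (Fin (2*n))) (c : LaurentPolynomial ℤ),
      fn n hn (Finsupp.single D c) = c • fnVec n hn D := by
    intro D c; simp [fn, Finsupp.linearCombination_single]
  have fn1_single : ∀ (D : Finset (Fin (2*n))) (c : LaurentPolynomial ℤ),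
      fn1 n hn (Finsupp.single D c) = c • fn1Vec n hn D := by
    intro D c; simp [fn1, Finsupp.linearCombination_single]
  have h1 : ln n hn ≠ lnb n hn := by
    simp only [ln, lnb, Fin.ext_iff, Ne]; omega
  have h2 : lnb n hn ≠ ln1 n hn := by
    simp only [ln1, lnb, Fin.ext_iff, Ne]; omega
  have h3 : ln n hn ≠ ln1b n hn := by
    simp only [ln, ln1b, Fin.ext_iff, Ne]; omega
  rw [fn_single, one_smul]
  by_cases hc : ln n hn ∈ C ∧ lnb n hn ∉ C
  · rw [fnVec, if_pos hc]
    set C' := insert (lnb n hn) (C.erase (ln n hn)) with hC'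
    have hlnb : lnb n hn ∈ C' := Finset.mem_insert_self _ _
    have hln : ln n hn ∉ C' := by
      simp [hC', Finset.mem_insert, Finset.mem_erase, h1]
    -- the two possible output columns of fn1Vec kill fn
    have hD1 : fn n hn (Finsupp.single (insert (ln n hn) (C'.erase (ln1 n hn)))
        (1 : LaurentPolynomial ℤ)) = 0 := by
      rw [fn_single, one_smul, fnVec, if_neg]
      rintro ⟨-, hb⟩
      exact hb (Finset.mem_insert_of_mem (Finset.mem_erase.2 ⟨h2, hlnb⟩))
    have hD2 : ∀ c : LaurentPolynomial ℤ,
        fn n hn (Finsupp.single (insert (ln1b n hn) (C'.erase (lnb n hn))) c) = 0 := by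
      intro c
      have hne : ¬(ln n hn ∈ insert (ln1b n hn) (C'.erase (lnb n hn)) ∧
          lnb n hn ∉ insert (ln1b n hn) (C'.erase (lnb n hn))) := by
        rintro ⟨ha, -⟩
        rcases Finset.mem_insert.1 ha with h | h
        · exact h3 h
        · exact hln (Finset.mem_of_mem_erase h)
      rw [fn_single, fnVec, if_neg hne, smul_zero]
    rw [fn1_single, one_smul, fn1Vec]
    split_ifs with e1 e2 e3 e4
    · exact hD1
    · exact hD2 1
    · exact hD2 (T (-1))
    · rw [map_add, hD1, hD2 (T 1), add_zero]
    · simp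
  · rw [fnVec, if_neg hc]
    simp
end

section
/- Let I be a finite totally ordered index set, M a free ℤ[q,q⁻¹]-module with basis (v_i)_{i∈I}, and (A_j)_{j∈I} a family in M with A_j = Σ_i α_{ij} v_i where α_{jj} = 1 and α_{ij} = 0 unless i ≤ j (upper unitriangular). Suppose there is a ℤ-linear involution x ↦ x̄ of M satisfying \overline{q·x} = q⁻¹·x̄ and Ā_j = A_j for all j. Then there exists a unique family (G_j)_{j∈I} with Ḡ_j = G_j, G_j = Σ_i d_{ij} v_i with d_{jj} ∈ 1 + qℤ[q], d_{ij} ∈ qℤ[q] for i ≠ j, and d_{ij} = 0 unless i ≤ j, and each G_j ∈ span_{ℤ[q,q⁻¹]}{A_k : k ≤ j} with coefficient 1 on A_j. -/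
open LaurentPolynomial

/-- `f` belongs to `q·ℤ[q]`: it is a genuine polynomial with zero constant term. -/
def InQZq (f : LaurentPolynomial ℤ) : Prop :=
  ∃ g : Polynomial ℤ, g.coeff 0 = 0 ∧ Polynomial.toLaurent g = f

namespace Stmt16Aux

open Polynomial

abbrev L := LaurentPolynomial ℤ

lemma toLaurent_coeff (p : Polynomial ℤ) (m : ℕ) : (toLaurent p).coeff (m : ℤ) = p.coeff m := by
  rw [coeff_toLaurent]
  exact Finsupp.mapDomain_apply (fun a b h => Int.ofNat.inj h) _ _

lemma toLaurent_coeff_neg (p : Polynomial ℤ) (n : ℤ) (hn : n < 0) : (toLaurent p).coeff n = 0 := by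
  rw [coeff_toLaurent]
  refine Finsupp.mapDomain_notin_range _ _ ?_
  rintro ⟨m, rfl⟩
  exact absurd hn (Int.natCast_nonneg m).not_gt

lemma inQZq_iff (f : L) : InQZq f ↔ ∀ n : ℤ, n ≤ 0 → f.coeff n = 0 := by
  constructor
  · rintro ⟨g, hg0, rfl⟩ n hn
    rcases lt_or_eq_of_le hn with h | rfl
    · exact toLaurent_coeff_neg g n h
    · simpa using (toLaurent_coeff g 0).trans hg0
  · intro h
    refine ⟨trunc f, h 0 le_rfl, ?_⟩
    ext n
    rcases n with m | m
    · exact (toLaurent_coeff (trunc f) m)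
    · rw [toLaurent_coeff_neg _ _ (Int.negSucc_lt_zero m), h _ (le_of_lt (Int.negSucc_lt_zero m))]

lemma inQZq_zero : InQZq 0 := (inQZq_iff 0).2 fun _ _ => rfl

lemma inQZq_sub {f g : L} (hf : InQZq f) (hg : InQZq g) : InQZq (f - g) := by
  rw [inQZq_iff] at *
  intro n hn; rw [AddMonoidAlgebra.coeff_sub, Finsupp.sub_apply, hf n hn, hg n hn, sub_zero]

lemma invert_eq_self_inQZq {f : L} (h1 : invert f = f) (h2 : InQZq f) : f = 0 := by
  rw [inQZq_iff] at h2
  ext n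
  rcases le_or_gt n 0 with hn | hn
  · exact h2 n hn
  · calc f.coeff n = (invert f).coeff n := by rw [h1]
    _ = f.coeff (-n) := invert_apply f n
    _ = 0 := h2 _ (by omega)

lemma exists_gam (f : L) : ∃ γ : L, invert γ = γ ∧ InQZq (f + γ) := by
  set l : L := AddMonoidAlgebra.ofCoeff (f.coeff.filter (fun n => n < 0)) with hl
  refine ⟨-(l + invert l + LaurentPolynomial.C (f.coeff 0)), ?_, ?_⟩
  · rw [map_neg, map_add, map_add, LaurentPolynomial.involutive_invert l]
    rw [invert_C]; ring
  · rw [inQZq_iff]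
    intro n hn
    have hll : ∀ m : ℤ, l.coeff m = if m < 0 then f.coeff m else 0 := fun m => Finsupp.filter_apply _ _ _
    have hinv : ∀ m : ℤ, (invert l).coeff m = l.coeff (-m) := fun m => invert_apply l m
    rw [AddMonoidAlgebra.coeff_add, AddMonoidAlgebra.coeff_neg, AddMonoidAlgebra.coeff_add,
      AddMonoidAlgebra.coeff_add, Finsupp.add_apply, Finsupp.neg_apply, Finsupp.add_apply,
      Finsupp.add_apply, hinv, hll, hll, C_apply]
    rcases lt_or_eq_of_le hn with h | rfl
    · simp [h, h.ne, not_lt.2 (by omega : (0:ℤ) ≤ -n), lt_asymm h]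
    · simp

noncomputable def gam (f : L) : L := (exists_gam f).choose

lemma gam_invert (f : L) : invert (gam f) = gam f := (exists_gam f).choose_spec.1

lemma gam_inQZq (f : L) : InQZq (f + gam f) := (exists_gam f).choose_spec.2

section

variable {I : Type} [Fintype I] [LinearOrder I]

section Bsemi

variable {B : (I →₀ L) → (I →₀ L)}
    (hBadd : ∀ x y, B (x + y) = B x + B y)
    (hBq : ∀ x, B ((T 1 : L) • x) = (T (-1) : L) • B x)

set_option linter.unusedSectionVars false
include hBadd hBq

lemma B_zsmul (a : ℤ) (x : I →₀ L) : B (a • x) = a • B x :=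
  map_zsmul (AddMonoidHom.mk' B hBadd) a x

lemma B_T (n : ℤ) (x : I →₀ L) : B ((T n : L) • x) = (T (-n) : L) • B x := by
  have key : ∀ y : I →₀ L, B ((T (-1) : L) • y) = (T 1 : L) • B y := by
    intro y
    have h := hBq ((T (-1) : L) • y)
    rw [smul_smul, ← T_add] at h
    norm_num at h
    rw [h, smul_smul, ← T_add]
    norm_num
  induction n using Int.induction_on with
  | zero => simp
  | succ n ih =>
    have : (T ((n : ℤ) + 1) : L) • x = (T 1 : L) • ((T (n : ℤ) : L) • x) := by
      rw [smul_smul, ← T_add, add_comm]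
    rw [this, hBq, ih, smul_smul, ← T_add]
    ring_nf
  | pred n ih =>
    have : (T (-(n : ℤ) - 1) : L) • x = (T (-1) : L) • ((T (-(n : ℤ)) : L) • x) := by
      rw [smul_smul, ← T_add]; ring_nf
    rw [this, key, ih, smul_smul, ← T_add]
    ring_nf

lemma B_smul (f : L) (x : I →₀ L) : B (f • x) = invert f • B x := by
  induction f using LaurentPolynomial.induction_on' with
  | add p q hp hq => rw [add_smul, hBadd, hp, hq, map_add, add_smul]
  | C_mul_T n a =>
    rw [map_mul, invert_C, invert_T, mul_smul, mul_smul, LaurentPolynomial.C_eq_algebraMap,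
      algebraMap_smul, algebraMap_smul, B_zsmul hBadd hBq, B_T hBadd hBq]

lemma B_univ_sum (A : I → (I →₀ L)) (hBA : ∀ j, B (A j) = A j) (e : I → L) :
    B (∑ k, e k • A k) = ∑ k, invert (e k) • A k := by
  calc B (∑ k, e k • A k) = ∑ k, B (e k • A k) :=
        map_sum (AddMonoidHom.mk' B hBadd) (fun k => e k • A k) Finset.univ
    _ = ∑ k, invert (e k) • A k :=
        Finset.sum_congr rfl fun k _ => by rw [B_smul hBadd hBq, hBA]

end Bsemi

lemma sum_univ_apply (e : I → L) (A : I → (I →₀ L)) (i : I) :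
    (∑ k, e k • A k) i = ∑ k, e k * A k i := by
  rw [Finsupp.finset_sum_apply]
  exact Finset.sum_congr rfl fun k _ => by rw [Finsupp.smul_apply, smul_eq_mul]

lemma sum_eq_univ (A : I → (I →₀ L)) (c : I →₀ L) :
    (c.sum fun k r => r • A k) = ∑ k, c k • A k :=
  Finsupp.sum_fintype _ _ fun k => zero_smul _ _

/-- Evaluation at a maximal element of the support. -/
lemma eval_max (A : I → (I →₀ L)) (hAdiag : ∀ j, A j j = 1)
    (hAtri : ∀ i j, A j i ≠ 0 → i ≤ j) (e : I → L) (k : I)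
    (hk : ∀ m, e m ≠ 0 → m ≤ k) : (∑ m, e m • A m) k = e k := by
  rw [sum_univ_apply]
  rw [Finset.sum_eq_single k]
  · rw [hAdiag, mul_one]
  · intro m _ hmk
    by_cases hm : e m = 0
    · rw [hm, zero_mul]
    · have h1 : m ≤ k := hk m hm
      have h2 : A m k = 0 := by
        by_contra h
        exact hmk (le_antisymm h1 (hAtri k m h))
      rw [h2, mul_zero]
  · intro h; exact absurd (Finset.mem_univ k) h

lemma indep (A : I → (I →₀ L)) (hAdiag : ∀ j, A j j = 1)
    (hAtri : ∀ i j, A j i ≠ 0 → i ≤ j) (e : I → L)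
    (h : (∑ k, e k • A k) = 0) : ∀ m, e m = 0 := by
  classical
  by_contra h0
  push_neg at h0
  set s : Finset I := Finset.univ.filter (fun m => e m ≠ 0) with hs
  have hne : s.Nonempty := by
    obtain ⟨m, hm⟩ := h0
    exact ⟨m, by simp [hs, hm]⟩
  set k := s.max' hne with hkdef
  have hk : ∀ m, e m ≠ 0 → m ≤ k := fun m hm => s.le_max' m (by simp [hs, hm])
  have := eval_max A hAdiag hAtri e k hk
  rw [h] at this
  have hk0 : e k = 0 := by rw [← this]; rfl
  have : k ∈ s := s.max'_mem hne
  rw [hs, Finset.mem_filter] at this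
  exact this.2 hk0

/-- the measure used for the downward recursion -/
private def meas (i : I) : ℕ := (Finset.univ.filter (fun x => i < x)).card

private lemma meas_lt {i k : I} (h : i < k) : meas k < meas i := by
  apply Finset.card_lt_card
  constructor
  · intro x hx
    rw [Finset.mem_filter] at *
    exact ⟨hx.1, h.trans hx.2⟩
  · intro hsub
    have := hsub (by simp [h] : k ∈ Finset.univ.filter (fun x => i < x))
    rw [Finset.mem_filter] at this
    exact lt_irrefl k this.2

noncomputable def gamma (A : I → (I →₀ L)) (j : I) (i : I) : L :=
  gam ((A j i) + ∑ k ∈ (Finset.univ.filter (fun k => i < k ∧ k < j)).attach,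
      gamma A j k.1 * (A k.1 i))
termination_by meas i
decreasing_by
  have hk := k.2
  rw [Finset.mem_filter] at hk
  exact meas_lt hk.2.1

lemma gamma_eq (A : I → (I →₀ L)) (j i : I) :
    gamma A j i =
      gam ((A j i) + ∑ k ∈ Finset.univ.filter (fun k => i < k ∧ k < j),
        gamma A j k * (A k i)) := by
  rw [gamma]
  congr 1
  rw [Finset.sum_attach _ (fun k => gamma A j k * (A k) i)]

end

end Stmt16Aux


open Stmt16Aux in
/-- Lusztig's triangularity lemma.  `M = I →₀ ℤ[q,q⁻¹]` is free on `(v_i)`, the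
family `A j = Σ_i α_{ij} v_i` is upper unitriangular, and `B` is a ℤ-linear
involution with `B(q·x) = q⁻¹·B x` fixing every `A j`.  Then there is a unique
family `(G j)` fixed by `B`, upper triangular with `G j j ∈ 1 + qℤ[q]`,
`G j i ∈ qℤ[q]` for `i ≠ j`, and `G j` in the span of `{A k : k ≤ j}` with
coefficient `1` on `A j`. -/
theorem stmt16 {I : Type} [Fintype I] [LinearOrder I]
    (A : I → (I →₀ LaurentPolynomial ℤ))
    (hAdiag : ∀ j, A j j = 1)
    (hAtri : ∀ i j, A j i ≠ 0 → i ≤ j)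
    (B : (I →₀ LaurentPolynomial ℤ) → (I →₀ LaurentPolynomial ℤ))
    (hBadd : ∀ x y, B (x + y) = B x + B y)
    (hBinv : ∀ x, B (B x) = x)
    (hBq : ∀ x, B ((T 1 : LaurentPolynomial ℤ) • x) = (T (-1) : LaurentPolynomial ℤ) • B x)
    (hBA : ∀ j, B (A j) = A j) :
    ∃! G : I → (I →₀ LaurentPolynomial ℤ), ∀ j,
      B (G j) = G j ∧
      InQZq (G j j - 1) ∧
      (∀ i, i ≠ j → InQZq (G j i)) ∧
      (∀ i, G j i ≠ 0 → i ≤ j) ∧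
      ∃ c : I →₀ LaurentPolynomial ℤ, (∀ k, c k ≠ 0 → k ≤ j) ∧ c j = 1 ∧
        G j = c.sum fun k r => r • A k := by
  classical
  set cf : I → I → L := fun j k => if k = j then 1 else if k < j then gamma A j k else 0 with hcf
  have hcf_def : ∀ j k, cf j k = if k = j then 1 else if k < j then gamma A j k else 0 :=
    fun _ _ => rfl
  set G : I → (I →₀ L) := fun j => ∑ k, cf j k • A k with hG
  have hGdef : ∀ j, G j = ∑ k, cf j k • A k := fun _ => rfl
  have hcfj : ∀ j, cf j j = 1 := fun j => if_pos rfl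
  have hcfinv : ∀ j k, invert (cf j k) = cf j k := by
    intro j k
    rw [hcf_def]
    split_ifs with h1 h2
    · exact map_one _
    · rw [gamma_eq]; exact gam_invert _
    · exact map_zero _
  have hGapply : ∀ j i, G j i = ∑ k, cf j k * A k i := fun j i => sum_univ_apply (cf j) A i
  have hGdiag : ∀ j, G j j = 1 := by
    intro j
    rw [hGapply, Finset.sum_eq_single j]
    · rw [hcfj, hAdiag, one_mul]
    · intro b _ hbj
      rw [hcf_def, if_neg hbj]
      by_cases hb : b < j
      · rw [if_pos hb]
        have hA : A b j = 0 := by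
          by_contra h
          exact absurd (hAtri j b h) (not_le.2 hb)
        rw [hA, mul_zero]
      · rw [if_neg hb, zero_mul]
    · intro h; exact absurd (Finset.mem_univ j) h
  have hGhigh : ∀ j i, ¬ i ≤ j → G j i = 0 := by
    intro j i hij
    rw [hGapply]
    apply Finset.sum_eq_zero
    intro k _
    by_cases hkj : k = j
    · subst hkj
      have hA : A k i = 0 := by
        by_contra h
        exact hij (hAtri i k h)
      rw [hA, mul_zero]
    · by_cases hk2 : k < j
      · have hA : A k i = 0 := by
          by_contra h
          exact hij ((hAtri i k h).trans hk2.le)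
        rw [hA, mul_zero]
      · rw [hcf_def, if_neg hkj, if_neg hk2, zero_mul]
  have hGlow : ∀ j i, i < j → InQZq (G j i) := by
    intro j i hij
    have key : G j i = ((A j i) + ∑ k ∈ Finset.univ.filter (fun k => i < k ∧ k < j),
        gamma A j k * (A k i)) + gam ((A j i) + ∑ k ∈ Finset.univ.filter (fun k => i < k ∧ k < j),
        gamma A j k * (A k i)) := by
      rw [hGapply]
      have h1 : ∑ k, cf j k * A k i =
          ∑ k ∈ insert j (insert i (Finset.univ.filter (fun k => i < k ∧ k < j))),
            cf j k * A k i := by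
        refine (Finset.sum_subset (Finset.subset_univ _) ?_).symm
        intro k _ hk
        simp only [Finset.mem_insert, Finset.mem_filter, Finset.mem_univ, true_and,
          not_or, not_and] at hk
        obtain ⟨hkj, hki, hk3⟩ := hk
        rw [hcf_def, if_neg hkj]
        by_cases hklt : k < j
        · rw [if_pos hklt]
          have hik : ¬ i ≤ k := by
            have h4 : ¬ i < k := fun h => (hk3 h) hklt
            exact not_le.2 (lt_of_le_of_ne (not_lt.1 h4) hki)
          have hA : A k i = 0 := by
            by_contra h
            exact hik (hAtri i k h)
          rw [hA, mul_zero]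
        · rw [if_neg hklt, zero_mul]
      have hjmem : j ∉ insert i (Finset.univ.filter (fun k => i < k ∧ k < j)) := by
        simp [Finset.mem_insert, Finset.mem_filter, hij.ne', lt_irrefl]
      have himem : i ∉ Finset.univ.filter (fun k => i < k ∧ k < j) := by
        simp [Finset.mem_filter, lt_irrefl]
      rw [h1, Finset.sum_insert hjmem, Finset.sum_insert himem]
      rw [hcfj, one_mul]
      rw [show cf j i = gamma A j i from by rw [hcf_def, if_neg (ne_of_lt hij), if_pos hij]]
      rw [hAdiag, mul_one]
      rw [show ∑ k ∈ Finset.univ.filter (fun k => i < k ∧ k < j), cf j k * A k i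
          = ∑ k ∈ Finset.univ.filter (fun k => i < k ∧ k < j), gamma A j k * A k i from
        Finset.sum_congr rfl fun k hk => by
          rw [Finset.mem_filter] at hk
          rw [hcf_def, if_neg (ne_of_lt hk.2.2), if_pos hk.2.2]]
      rw [← gamma_eq]
      ring
    rw [key]
    exact gam_inQZq _
  have hGbar : ∀ j, B (G j) = G j := by
    intro j
    rw [hGdef, B_univ_sum hBadd hBq A hBA (cf j)]
    exact Finset.sum_congr rfl fun k _ => by rw [hcfinv]
  have hGq : ∀ j i, i ≠ j → InQZq (G j i) := by
    intro j i hij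
    rcases lt_or_gt_of_ne hij with h | h
    · exact hGlow j i h
    · rw [hGhigh j i (not_le.2 h)]
      exact inQZq_zero
  have hGrepr : ∀ j, G j = (Finsupp.equivFunOnFinite.symm (cf j)).sum fun k r => r • A k := by
    intro j
    rw [sum_eq_univ]
    rfl
  refine ⟨G, ?_, ?_⟩
  · intro j
    refine ⟨hGbar j, ?_, hGq j, fun i h => ?_, Finsupp.equivFunOnFinite.symm (cf j), ?_, ?_, hGrepr j⟩
    · rw [hGdiag, sub_self]; exact inQZq_zero
    · by_contra hc
      exact h (hGhigh j i hc)
    · intro k hk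
      have hk' : cf j k ≠ 0 := hk
      rw [hcf_def] at hk'
      by_cases h1 : k = j
      · exact h1.le
      · rw [if_neg h1] at hk'
        by_cases h2 : k < j
        · exact h2.le
        · rw [if_neg h2] at hk'
          exact absurd rfl hk'
    · show cf j j = 1
      exact hcfj j
  · intro G' hG'
    have hBsub : ∀ x y : I →₀ L, B (x - y) = B x - B y :=
      fun x y => map_sub (AddMonoidHom.mk' B hBadd) x y
    funext j
    obtain ⟨hb1, _, hq1, _, c1, hc1s, hc1j, hc1r⟩ := hG' j
    set e : I → L := fun k => c1 k - cf j k with he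
    have hD : G' j - G j = ∑ k, e k • A k := by
      rw [hc1r, hGdef, sum_eq_univ, ← Finset.sum_sub_distrib]
      exact Finset.sum_congr rfl fun k _ => by rw [he, sub_smul]
    have hBD : B (G' j - G j) = G' j - G j := by
      rw [hBsub, hb1, hGbar j]
    have h0 : ∑ k, (invert (e k) - e k) • A k = 0 := by
      have h1 : ∑ k, invert (e k) • A k = ∑ k, e k • A k := by
        rw [← B_univ_sum hBadd hBq A hBA e, ← hD, hBD, hD]
      calc ∑ k, (invert (e k) - e k) • A k
          = ∑ k, (invert (e k) • A k - e k • A k) :=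
            Finset.sum_congr rfl fun k _ => by rw [sub_smul]
        _ = ∑ k, invert (e k) • A k - ∑ k, e k • A k := Finset.sum_sub_distrib _ _
        _ = 0 := by rw [h1, sub_self]
    have hinv_e : ∀ k, invert (e k) = e k :=
      fun k => sub_eq_zero.mp (indep A hAdiag hAtri _ h0 k)
    have hej : e j = 0 := by
      rw [he]
      show c1 j - cf j j = 0
      rw [hc1j, hcfj, sub_self]
    have hek : ∀ m, e m = 0 := by
      by_contra h0'
      push_neg at h0'
      set s : Finset I := Finset.univ.filter (fun m => e m ≠ 0) with hs
      have hne : s.Nonempty := by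
        obtain ⟨m, hm⟩ := h0'
        exact ⟨m, by simp [hs, hm]⟩
      set k := s.max' hne with hkdef
      have hkmem : k ∈ s := s.max'_mem hne
      have hkne : e k ≠ 0 := by
        rw [hs, Finset.mem_filter] at hkmem
        exact hkmem.2
      have hkmax : ∀ m, e m ≠ 0 → m ≤ k := fun m hm => s.le_max' m (by simp [hs, hm])
      have hkj : k ≤ j := by
        by_cases h1 : c1 k = 0
        · have h2 : cf j k ≠ 0 := by
            intro h
            apply hkne
            rw [he]; show c1 k - cf j k = 0; rw [h1, h, sub_self]
          rw [hcf_def] at h2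
          by_cases ha : k = j
          · exact ha.le
          · rw [if_neg ha] at h2
            by_cases hb : k < j
            · exact hb.le
            · rw [if_neg hb] at h2; exact absurd rfl h2
        · exact hc1s k h1
      have hknej : k ≠ j := fun h => hkne (h ▸ hej)
      have hDk : (G' j - G j) k = e k := by
        rw [hD]
        exact eval_max A hAdiag hAtri e k hkmax
      have hq : InQZq (e k) := by
        rw [← hDk, Finsupp.sub_apply]
        exact inQZq_sub (hq1 k hknej) (hGq j k hknej)
      exact hkne (invert_eq_self_inQZq (hinv_e k) hq)
    have : G' j - G j = 0 := by
      rw [hD]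
      exact Finset.sum_eq_zero fun k _ => by rw [hek k, zero_smul]
    exact sub_eq_zero.mp this
end
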